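/- Let λ > 0 and f ∈ C⁰[a,b]. Suppose P = [a = t₀ < t₁ < ⋯ < t_k < t_{k+1} = b] is a partition of [a,b] such that Φ_{[a,b],λ,P}(f) = Φ_{[a,b],λ}(f) and |P| is maximal among all partitions attaining this value. If [a,t₁] is an uptick (resp. downtick), then min_{a≤x≤t₁} f(x) > f(a) − λ/2 (resp. max_{a≤x≤t₁} f(x) < f(a) + λ/2). -/

import Mathlib

open scoped BigOperators ENNReal
open MeasureTheory Set Filter

/-!
If `f` rises on `[a, t₁]` but dips to `f x ≤ f a - λ/2` somewhere inside, inserting `x` into `P`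
gains at least `2 (f a - f x) ≥ λ` in variation, which pays for the extra point; the refined
partition is then still optimal and has more points. This needs `Φ_{[a,b],λ}(f)` to be a genuine
supremum: for continuous `f`, intervals shorter than the modulus of uniform continuity at `λ`
contribute negatively to `Φ_{[a,b],λ,P}(f)`, so it is bounded by `λ + C (b - a)`.
Downticks reduce to upticks of `-f`.
-/

/-- A partition `a = t₀ < t₁ < ⋯ < t_k < t_{k+1} = b` of `[a,b]` with `k` interior points. -/
structure RTVPartition (a b : ℝ) where
  k : ℕ
  t : ℕ → ℝ
  ht0 : t 0 = a
  htlast : t (k + 1) = b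
  hmono : ∀ i, i ≤ k → t i < t (i + 1)

/-- `Φ_{[a,b],λ,P}(f) = ∑_{i=1}^{k+1} |f(t_i) − f(t_{i−1})| − λ·|P|`. -/
noncomputable def phiP (lam a b : ℝ) (f : ℝ → ℝ) (P : RTVPartition a b) : ℝ :=
  (∑ i ∈ Finset.range (P.k + 1), |f (P.t (i + 1)) - f (P.t i)|) - lam * P.k

/-- The regularized total variation `Φ_{[a,b],λ}(f) = sup_P Φ_{[a,b],λ,P}(f)`. -/
noncomputable def phiRTV (lam a b : ℝ) (f : ℝ → ℝ) : ℝ :=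
  ⨆ P : RTVPartition a b, phiP lam a b f P

namespace RTVPartition

variable {a b : ℝ} (P : RTVPartition a b)

lemma strictMonoOn_t : StrictMonoOn P.t (Iic (P.k + 1)) :=
  strictMonoOn_Iic_of_lt_succ fun i hi => P.hmono i (Nat.lt_succ_iff.mp hi)

lemma t_mem {i : ℕ} (hi : i ≤ P.k + 1) : P.t i ∈ Icc a b := by
  have hmono := P.strictMonoOn_t.monotoneOn
  constructor
  · simpa only [P.ht0] using hmono (mem_Iic.2 (Nat.zero_le _)) (mem_Iic.2 hi) (Nat.zero_le i)
  · simpa only [P.htlast] using hmono (mem_Iic.2 hi) (mem_Iic.2 le_rfl) hi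

lemma sum_sub_t : ∑ i ∈ Finset.range (P.k + 1), (P.t (i + 1) - P.t i) = b - a := by
  rw [Finset.sum_range_sub, P.ht0, P.htlast]

def insertFirst (x : ℝ) (hax : a < x) (hx1 : x < P.t 1) : RTVPartition a b where
  k := P.k + 1
  t
    | 0 => a
    | 1 => x
    | n + 2 => P.t (n + 1)
  ht0 := rfl
  htlast := P.htlast
  hmono
    | 0, _ => hax
    | 1, _ => hx1
    | n + 2, hn => P.hmono (n + 1) (by omega)

end RTVPartition

lemma phiP_eq_sum_add (lam a b : ℝ) (f : ℝ → ℝ) (P : RTVPartition a b) :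
    phiP lam a b f P =
      ∑ i ∈ Finset.range (P.k + 1), (|f (P.t (i + 1)) - f (P.t i)| - lam) + lam := by
  rw [phiP, Finset.sum_sub_distrib, Finset.sum_const, Finset.card_range, nsmul_eq_mul]
  push_cast
  ring

lemma ContinuousOn.exists_abs_sub_le_add_mul {f : ℝ → ℝ} {a b ε : ℝ}
    (hf : ContinuousOn f (Icc a b)) (hε : 0 < ε) :
    ∃ C, ∀ x ∈ Icc a b, ∀ y ∈ Icc a b, |f x - f y| ≤ ε + C * |x - y| := by
  obtain ⟨M, hM⟩ := isCompact_Icc.exists_bound_of_continuousOn hf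
  obtain ⟨δ, hδ, hclose⟩ :=
    Metric.uniformContinuousOn_iff.mp (isCompact_Icc.uniformContinuousOn_of_continuous hf) ε hε
  refine ⟨2 * M / δ, fun x hx y hy => ?_⟩
  have hfx := hM x hx
  have hfy := hM y hy
  rw [Real.norm_eq_abs] at hfx hfy
  have hM0 : 0 ≤ 2 * M / δ * |x - y| := by positivity [(abs_nonneg _).trans hfx]
  rcases lt_or_ge |x - y| δ with hxy | hxy
  · have := hclose x hx y hy hxy
    rw [Real.dist_eq] at this
    linarith
  · have : 2 * M ≤ 2 * M / δ * |x - y| := by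
      rw [div_mul_eq_mul_div, le_div_iff₀ hδ]
      exact mul_le_mul_of_nonneg_left hxy (by linarith [abs_nonneg (f x)])
    linarith [abs_sub (f x) (f y)]

lemma phiP_le_of_abs_sub_le {lam a b C : ℝ} {f : ℝ → ℝ}
    (hC : ∀ x ∈ Icc a b, ∀ y ∈ Icc a b, |f x - f y| ≤ lam + C * |x - y|)
    (P : RTVPartition a b) : phiP lam a b f P ≤ lam + C * (b - a) := by
  rw [phiP_eq_sum_add, ← P.sum_sub_t, Finset.mul_sum, add_comm lam]
  gcongr with i hi
  have hi : i ≤ P.k := Nat.lt_succ_iff.mp (Finset.mem_range.mp hi)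
  have := hC _ (P.t_mem (i := i + 1) (by omega)) _ (P.t_mem (i := i) (by omega))
  rw [abs_of_pos (sub_pos.mpr (P.hmono i hi))] at this
  linarith

lemma bddAbove_range_phiP {lam a b : ℝ} {f : ℝ → ℝ} (hlam : 0 < lam)
    (hf : ContinuousOn f (Icc a b)) : BddAbove (range (phiP lam a b f)) := by
  obtain ⟨C, hC⟩ := hf.exists_abs_sub_le_add_mul hlam
  exact ⟨lam + C * (b - a), forall_mem_range.mpr (phiP_le_of_abs_sub_le hC)⟩

lemma phiP_insertFirst (lam a b : ℝ) (f : ℝ → ℝ) (P : RTVPartition a b) (x : ℝ) (hax : a < x)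
    (hx1 : x < P.t 1) :
    phiP lam a b f (P.insertFirst x hax hx1) =
      phiP lam a b f P + |f x - f a| + |f (P.t 1) - f x| - |f (P.t 1) - f a| - lam := by
  simp only [phiP, RTVPartition.insertFirst, Finset.sum_range_succ', P.ht0]
  push_cast
  ring

/-- Going through `x` adds at least `2 (f a - f x) ≥ lam` to the variation, paying for the new point. -/
lemma phiP_le_phiP_insertFirst {lam a b : ℝ} {f : ℝ → ℝ} (P : RTVPartition a b) {x : ℝ}
    (hax : a < x) (hx1 : x < P.t 1) (hup : f a ≤ f (P.t 1)) (hx : f x ≤ f a - lam / 2) :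
    phiP lam a b f P ≤ phiP lam a b f (P.insertFirst x hax hx1) := by
  rw [phiP_insertFirst, abs_of_nonneg (sub_nonneg.mpr hup)]
  linarith [le_abs_self (f (P.t 1) - f x), neg_abs_le (f x - f a)]

def IsMaximalOptimal (lam a b : ℝ) (f : ℝ → ℝ) (P : RTVPartition a b) : Prop :=
  phiP lam a b f P = phiRTV lam a b f ∧
    ∀ Q : RTVPartition a b, phiP lam a b f Q = phiRTV lam a b f → Q.k ≤ P.k

lemma IsMaximalOptimal.phiP_lt {lam a b : ℝ} {f : ℝ → ℝ} {P Q : RTVPartition a b}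
    (hP : IsMaximalOptimal lam a b f P) (hbdd : BddAbove (range (phiP lam a b f)))
    (hk : P.k < Q.k) : phiP lam a b f Q < phiP lam a b f P := by
  by_contra! hle
  have hQ : phiP lam a b f Q = phiRTV lam a b f :=
    le_antisymm (le_ciSup hbdd Q) (hP.1 ▸ hle)
  exact (hP.2 Q hQ).not_gt hk

lemma phiP_neg (lam a b : ℝ) (f : ℝ → ℝ) : phiP lam a b (-f) = phiP lam a b f := by
  funext P
  simp only [phiP, Pi.neg_apply, ← neg_sub', abs_neg]

lemma phiRTV_neg (lam a b : ℝ) (f : ℝ → ℝ) : phiRTV lam a b (-f) = phiRTV lam a b f := by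
  rw [phiRTV, phiRTV, phiP_neg]

lemma IsMaximalOptimal.neg {lam a b : ℝ} {f : ℝ → ℝ} {P : RTVPartition a b}
    (hP : IsMaximalOptimal lam a b f P) : IsMaximalOptimal lam a b (-f) P := by
  rwa [IsMaximalOptimal, phiP_neg, phiRTV_neg]

lemma IsMaximalOptimal.sub_half_lt_of_uptick {lam a b : ℝ} {f : ℝ → ℝ} {P : RTVPartition a b}
    (hlam : 0 < lam) (hbdd : BddAbove (range (phiP lam a b f)))
    (hP : IsMaximalOptimal lam a b f P) (hup : f a < f (P.t 1)) :
    ∀ x ∈ Icc a (P.t 1), f a - lam / 2 < f x := by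
  intro x hx
  by_contra! hfx
  have hax : a < x := hx.1.lt_of_ne (by rintro rfl; linarith)
  have hx1 : x < P.t 1 := hx.2.lt_of_ne (by rintro rfl; linarith)
  exact (hP.phiP_lt hbdd (Q := P.insertFirst x hax hx1) (Nat.lt_succ_self _)).not_ge
    (phiP_le_phiP_insertFirst P hax hx1 hup.le hfx)

/-- If `P` attains `Φ_{[a,b],λ}(f)` with `|P|` maximal among all partitions attaining it, and
`[a,t₁]` is an uptick (resp. downtick), then `min_{a≤x≤t₁} f(x) > f(a) − λ/2`
(resp. `max_{a≤x≤t₁} f(x) < f(a) + λ/2`). -/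
theorem maximal_optimal_partition_first_interval (lam a b : ℝ) (hlam : 0 < lam) (f : ℝ → ℝ)
    (hf : ContinuousOn f (Icc a b)) (P : RTVPartition a b)
    (hopt : phiP lam a b f P = phiRTV lam a b f)
    (hmax : ∀ Q : RTVPartition a b, phiP lam a b f Q = phiRTV lam a b f → Q.k ≤ P.k) :
    (f a < f (P.t 1) → ∀ x ∈ Icc a (P.t 1), f a - lam / 2 < f x) ∧
    (f (P.t 1) < f a → ∀ x ∈ Icc a (P.t 1), f x < f a + lam / 2) := by
  have hbdd := bddAbove_range_phiP hlam hf
  have hP : IsMaximalOptimal lam a b f P := ⟨hopt, hmax⟩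
  refine ⟨hP.sub_half_lt_of_uptick hlam hbdd, fun hdown x hx => ?_⟩
  have := hP.neg.sub_half_lt_of_uptick hlam (by rwa [phiP_neg]) (neg_lt_neg hdown) x hx
  simp only [Pi.neg_apply] at this
  linarith
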